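/- arXiv:math/0510569 — 6 statements merged into one kernel-verified Lean document; each statement's English description precedes it below -/
import Mathlib

section
/- Let X be a set and let φ, ψ, η be bijections of X. Let U ⊆ X, suppose φ and ψ are supported in U, and suppose η displaces U, i.e. η(U) ∩ U = ∅. Set θ := φηφ⁻¹η⁻¹. Then θψθ⁻¹ψ⁻¹ = φψφ⁻¹ψ⁻¹, i.e. [θ, ψ] = [φ, ψ]. (This is the combinatorial claim in the proof of the paper's Lemma 3.10.) -/
/-!
Write `θ = φ * a` with `a = η φ⁻¹ η⁻¹`. The permutation `a` is supported in `η(U)`, which misses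
`U`, so `a` and `ψ` have disjoint supports and commute; a commuting right factor does not change
the commutator with `ψ`.
-/

open scoped commutatorElement

theorem commutatorElement_mul_of_commute {G : Type*} [Group G] (g : G) {a b : G}
    (hab : Commute a b) : ⁅g * a, b⁆ = ⁅g, b⁆ := by
  rw [commutatorElement_def, commutatorElement_def, mul_inv_rev, mul_assoc g a b, hab.eq]
  group

namespace Equiv.Perm

variable {X : Type*}

theorem conj_apply_eq_self_of_image_inter_eq_empty {φ η : Perm X} {U : Set X}
    (hφ : ∀ p ∉ U, φ p = p) (hη : ⇑η '' U ∩ U = ∅) :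
    ∀ p ∈ U, (η * φ * η⁻¹) p = p := by
  intro p hp
  have hp' : η⁻¹ p ∉ U := fun h => hη.subset ⟨⟨_, h, by simp⟩, hp⟩
  rw [mul_apply, mul_apply, hφ _ hp']
  exact η.apply_symm_apply p

theorem disjoint_of_fixes_mem_of_fixes_notMem {f g : Perm X} {U : Set X}
    (hf : ∀ p ∈ U, f p = p) (hg : ∀ p ∉ U, g p = p) : Disjoint f g :=
  fun p => (em (p ∈ U)).imp (hf p) (hg p)

end Equiv.Perm

open Equiv.Perm in
/-- If `φ, ψ` are bijections of `X` supported in `U` and `η` displaces `U`,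
then with `θ := φ η φ⁻¹ η⁻¹` one has `[θ, ψ] = [φ, ψ]`. -/
theorem stmt_2 {X : Type*} (φ ψ η : Equiv.Perm X) (U : Set X)
    (hφ : ∀ p ∉ U, φ p = p) (hψ : ∀ p ∉ U, ψ p = p)
    (hη : ⇑η '' U ∩ U = ∅) :
    (φ * η * φ⁻¹ * η⁻¹) * ψ * (φ * η * φ⁻¹ * η⁻¹)⁻¹ * ψ⁻¹
      = φ * ψ * φ⁻¹ * ψ⁻¹ := by
  have hφinv : ∀ p ∉ U, φ⁻¹ p = p := fun p hp => inv_eq_iff_eq.2 (hφ p hp).symm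
  have hcomm : Commute (η * φ⁻¹ * η⁻¹) ψ :=
    (disjoint_of_fixes_mem_of_fixes_notMem
      (conj_apply_eq_self_of_image_inter_eq_empty hφinv hη) hψ).commute
  have h := commutatorElement_mul_of_commute φ hcomm
  simp only [commutatorElement_def, mul_assoc] at h ⊢
  exact h
end

section
/- Let X be a set, G a subgroup of the group of bijections of X, and ρ : G → ℝ a conjugation-invariant pseudo-norm. Let U ⊆ X and let φ, ψ ∈ G be supported in U. Then for every η ∈ G with η(U) ∩ U = ∅, one has ρ(φψφ⁻¹ψ⁻¹) ≤ 4 ρ(η). Consequently the displacement energy de(U, ρ) := inf{ρ(η) : η ∈ G, η(U) ∩ U = ∅} satisfies de(U, ρ) ≥ (1/4) ρ([φ, ψ]). (This is the Claim in the proof of the paper's Lemma 3.10.) -/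
/-!
Conjugating `φ` by a displacement `η` of `U` gives `η φ η⁻¹`, supported in `η(U)` and hence
commuting with `ψ`. This lets one replace `φ` by `⁅φ, η⁆ = φ (η φ η⁻¹)⁻¹` in `⁅φ, ψ⁆` without
changing it. A commutator is at most twice the norm of either entry, so
`ρ ⁅φ, ψ⁆ = ρ ⁅⁅φ, η⁆, ψ⁆ ≤ 2 ρ ⁅φ, η⁆ ≤ 4 ρ η`.
-/

open scoped commutatorElement

section ConjInvariantPseudoNorm

variable {G : Type*} [Group G] {ρ : G → ℝ}

theorem commutatorElement_le_two_mul_right (hinv : ∀ g, ρ g⁻¹ = ρ g)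
    (htri : ∀ g h, ρ (g * h) ≤ ρ g + ρ h) (hconj : ∀ g h, ρ (h * g * h⁻¹) = ρ g) (g h : G) :
    ρ ⁅g, h⁆ ≤ 2 * ρ h :=
  calc ρ ⁅g, h⁆ = ρ (g * h * g⁻¹ * h⁻¹) := rfl
    _ ≤ ρ (g * h * g⁻¹) + ρ h⁻¹ := htri _ _
    _ = 2 * ρ h := by rw [hconj, hinv]; ring

theorem commutatorElement_le_two_mul_left (hinv : ∀ g, ρ g⁻¹ = ρ g)
    (htri : ∀ g h, ρ (g * h) ≤ ρ g + ρ h) (hconj : ∀ g h, ρ (h * g * h⁻¹) = ρ g) (g h : G) :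
    ρ ⁅g, h⁆ ≤ 2 * ρ g := by
  rw [← hinv, commutatorElement_inv]
  exact commutatorElement_le_two_mul_right hinv htri hconj h g

theorem commutatorElement_commutatorElement_of_commute {φ ψ η : G}
    (h : Commute (η * φ * η⁻¹) ψ) : ⁅⁅φ, η⁆, ψ⁆ = ⁅φ, ψ⁆ := by
  have hψ : (η * φ * η⁻¹)⁻¹ * ψ * (η * φ * η⁻¹) = ψ := by
    rw [mul_assoc, ← h.eq, inv_mul_cancel_left]
  calc ⁅⁅φ, η⁆, ψ⁆ = φ * ((η * φ * η⁻¹)⁻¹ * ψ * (η * φ * η⁻¹)) * φ⁻¹ * ψ⁻¹ := by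
        simp only [commutatorElement_def]; group
    _ = ⁅φ, ψ⁆ := by rw [hψ, commutatorElement_def]

theorem commutatorElement_le_four_mul_of_commute_conj (hinv : ∀ g, ρ g⁻¹ = ρ g)
    (htri : ∀ g h, ρ (g * h) ≤ ρ g + ρ h) (hconj : ∀ g h, ρ (h * g * h⁻¹) = ρ g) {φ ψ η : G}
    (h : Commute (η * φ * η⁻¹) ψ) : ρ ⁅φ, ψ⁆ ≤ 4 * ρ η :=
  calc ρ ⁅φ, ψ⁆ = ρ ⁅⁅φ, η⁆, ψ⁆ := by rw [commutatorElement_commutatorElement_of_commute h]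
    _ ≤ 2 * ρ ⁅φ, η⁆ := commutatorElement_le_two_mul_left hinv htri hconj _ _
    _ ≤ 2 * (2 * ρ η) := by gcongr; exact commutatorElement_le_two_mul_right hinv htri hconj _ _
    _ = 4 * ρ η := by ring

end ConjInvariantPseudoNorm

namespace Equiv.Perm

variable {X : Type*} {U V : Set X} {σ τ : Equiv.Perm X}

theorem conj_apply_eq_self_of_notMem_image (hσ : ∀ p ∉ U, σ p = p) :
    ∀ p ∉ τ '' U, (τ * σ * τ⁻¹) p = p := by
  intro p hp
  have hp' : τ⁻¹ p ∉ U := fun h ↦ hp ⟨τ⁻¹ p, h, τ.apply_symm_apply p⟩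
  rw [mul_apply, mul_apply, hσ _ hp']
  exact τ.apply_symm_apply p

theorem disjoint_of_eq_self_of_notMem (hσ : ∀ p ∉ U, σ p = p) (hτ : ∀ p ∉ V, τ p = p)
    (hUV : _root_.Disjoint U V) : σ.Disjoint τ := by
  intro p
  by_cases hp : p ∈ U
  · exact Or.inr (hτ p (Set.disjoint_left.1 hUV hp))
  · exact Or.inl (hσ p hp)

end Equiv.Perm

theorem stmt_3_general {X : Type*} (G : Subgroup (Equiv.Perm X)) (ρ : G → ℝ)
    (hinv : ∀ g, ρ g⁻¹ = ρ g)
    (htri : ∀ g h, ρ (g * h) ≤ ρ g + ρ h)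
    (hconj : ∀ g h, ρ (h * g * h⁻¹) = ρ g)
    (U : Set X) (φ ψ : G)
    (hφ : ∀ p ∉ U, (φ : Equiv.Perm X) p = p)
    (hψ : ∀ p ∉ U, (ψ : Equiv.Perm X) p = p) :
    (∀ η : G, ⇑(η : Equiv.Perm X) '' U ∩ U = ∅ → ρ (φ * ψ * φ⁻¹ * ψ⁻¹) ≤ 4 * ρ η) ∧
      (1 / 4 * ρ (φ * ψ * φ⁻¹ * ψ⁻¹)) ∈
        lowerBounds {x : ℝ | ∃ η : G, ⇑(η : Equiv.Perm X) '' U ∩ U = ∅ ∧ ρ η = x} := by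
  have bound : ∀ η : G, ⇑(η : Equiv.Perm X) '' U ∩ U = ∅ →
      ρ (φ * ψ * φ⁻¹ * ψ⁻¹) ≤ 4 * ρ η := by
    intro η hη
    have hcomm : Commute (η * φ * η⁻¹) ψ := Subtype.ext <|
      (Equiv.Perm.disjoint_of_eq_self_of_notMem (Equiv.Perm.conj_apply_eq_self_of_notMem_image hφ)
        hψ (Set.disjoint_iff_inter_eq_empty.2 hη)).commute.eq
    exact commutatorElement_le_four_mul_of_commute_conj hinv htri hconj hcomm
  refine ⟨bound, ?_⟩
  rintro _ ⟨η, hη, rfl⟩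
  linarith [bound η hη]

/-- Let `G` be a subgroup of the group of bijections of `X`,
`ρ` a conjugation-invariant pseudo-norm on `G`, and `φ, ψ ∈ G` supported in `U ⊆ X`.
Then every `η ∈ G` displacing `U` satisfies `ρ [φ, ψ] ≤ 4 ρ η`; consequently
`(1/4) ρ [φ, ψ]` is a lower bound for `{ρ η : η ∈ G, η(U) ∩ U = ∅}`, i.e.
the displacement energy `de(U, ρ)` satisfies `de(U, ρ) ≥ (1/4) ρ [φ, ψ]`. -/
theorem stmt_3 {X : Type*} (G : Subgroup (Equiv.Perm X)) (ρ : G → ℝ)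
    (hnonneg : ∀ g, 0 ≤ ρ g) (hone : ρ 1 = 0)
    (hinv : ∀ g, ρ g⁻¹ = ρ g)
    (htri : ∀ g h, ρ (g * h) ≤ ρ g + ρ h)
    (hconj : ∀ g h, ρ (h * g * h⁻¹) = ρ g)
    (U : Set X) (φ ψ : G)
    (hφ : ∀ p ∉ U, (φ : Equiv.Perm X) p = p)
    (hψ : ∀ p ∉ U, (ψ : Equiv.Perm X) p = p) :
    (∀ η : G, ⇑(η : Equiv.Perm X) '' U ∩ U = ∅ → ρ (φ * ψ * φ⁻¹ * ψ⁻¹) ≤ 4 * ρ η) ∧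
      (1 / 4 * ρ (φ * ψ * φ⁻¹ * ψ⁻¹)) ∈
        lowerBounds {x : ℝ | ∃ η : G, ⇑(η : Equiv.Perm X) '' U ∩ U = ∅ ∧ ρ η = x} :=
  stmt_3_general G ρ hinv htri hconj U φ ψ hφ hψ
end

section
/- Let X be a Hausdorff topological space and let G be a subgroup of the group of homeomorphisms of X with the property that for every nonempty open set U ⊆ X there exist φ, ψ ∈ G supported in U with φψ ≠ ψφ. Let ρ : G → ℝ be a conjugation-invariant pseudo-norm. Then ρ is nondegenerate (i.e. ρ(g) > 0 for every g ≠ id) if and only if for every nonempty open set U ⊆ X there exists c > 0 such that ρ(η) ≥ c for every η ∈ G with η(U) ∩ U = ∅ (i.e. the displacement energy de(U, ρ) := inf{ρ(η) : η ∈ G, η(U) ∩ U = ∅} is positive for every nonempty open U). (This is the paper's Lemma 3.10, stated for a general group of homeomorphisms in place of Symp₀(M,ω).) -/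
/-- The group of homeomorphisms of a topological space `X`
(multiplication is composition: `(f * g) x = f (g x)`). -/
instance homeoGroup {X : Type*} [TopologicalSpace X] : Group (X ≃ₜ X) where
  mul f g := g.trans f
  one := Homeomorph.refl X
  inv := Homeomorph.symm
  mul_assoc _ _ _ := rfl
  one_mul _ := Homeomorph.ext fun _ => rfl
  mul_one _ := Homeomorph.ext fun _ => rfl
  inv_mul_cancel f := Homeomorph.ext fun x => f.symm_apply_apply x

/-- A homeomorphism supported in `A` maps `A` into `A`. -/
lemma maps_into_of_support {X : Type*} [TopologicalSpace X] {f : X ≃ₜ X} {A : Set X}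
    (hf : ∀ p ∉ A, f p = p) {x : X} (hx : x ∈ A) : f x ∈ A := by
  by_contra h
  have h1 : f (f x) = f x := hf _ h
  have h2 : f x = x := f.injective h1
  rw [h2] at h
  exact h hx

/-- Homeomorphisms supported in disjoint sets commute pointwise. -/
lemma commute_of_disjoint_support {X : Type*} [TopologicalSpace X] {f g : X ≃ₜ X}
    {A B : Set X} (hAB : A ∩ B = ∅)
    (hf : ∀ p ∉ A, f p = p) (hg : ∀ p ∉ B, g p = p) (x : X) :
    f (g x) = g (f x) := by
  by_cases hxA : x ∈ A
  · have hxB : x ∉ B := fun hxB => absurd (Set.mem_inter hxA hxB) (by simp [hAB])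
    have hfx : f x ∈ A := maps_into_of_support hf hxA
    have hfxB : f x ∉ B := fun hb => absurd (Set.mem_inter hfx hb) (by simp [hAB])
    rw [hg _ hxB, hg _ hfxB]
  · by_cases hxB : x ∈ B
    · have hgx : g x ∈ B := maps_into_of_support hg hxB
      have hgxA : g x ∉ A := fun ha => absurd (Set.mem_inter ha hgx) (by simp [hAB])
      rw [hf _ hgxA, hf _ hxA]
    · simp [hf _ hxA, hg _ hxB, hf, hg]

/-- Let `X` be Hausdorff and `G` a subgroup of the group of homeomorphisms
of `X` such that every nonempty open `U` supports two non-commuting elements of `G`.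
A conjugation-invariant pseudo-norm `ρ` on `G` is nondegenerate iff every nonempty open
set has positive displacement energy. -/
theorem stmt_5 {X : Type*} [TopologicalSpace X] [T2Space X]
    (G : Subgroup (X ≃ₜ X))
    (hloc : ∀ U : Set X, U.Nonempty → IsOpen U →
      ∃ φ ψ : G, (∀ p ∉ U, (φ : X ≃ₜ X) p = p) ∧ (∀ p ∉ U, (ψ : X ≃ₜ X) p = p) ∧
        φ * ψ ≠ ψ * φ)
    (ρ : G → ℝ)
    (hnonneg : ∀ g, 0 ≤ ρ g) (hone : ρ 1 = 0)
    (hinv : ∀ g, ρ g⁻¹ = ρ g)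
    (htri : ∀ g h, ρ (g * h) ≤ ρ g + ρ h)
    (hconj : ∀ g h, ρ (h * g * h⁻¹) = ρ g) :
    (∀ g : G, g ≠ 1 → 0 < ρ g) ↔
      ∀ U : Set X, U.Nonempty → IsOpen U →
        ∃ c > 0, ∀ η : G, ⇑(η : X ≃ₜ X) '' U ∩ U = ∅ → c ≤ ρ η := by
  constructor
  · -- nondegenerate → positive displacement energy
    intro hnd U hUne hUopen
    obtain ⟨φ, ψ, hφ, hψ, hne⟩ := hloc U hUne hUopen
    have hcomm_ne : φ * ψ * φ⁻¹ * ψ⁻¹ ≠ 1 := by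
      intro h
      apply hne
      have h2 : φ * ψ * φ⁻¹ * ψ⁻¹ * (ψ * φ) = 1 * (ψ * φ) := by rw [h]
      rw [one_mul] at h2
      calc φ * ψ = φ * ψ * φ⁻¹ * ψ⁻¹ * (ψ * φ) := by group
        _ = ψ * φ := h2
    have hpos := hnd _ hcomm_ne
    refine ⟨ρ (φ * ψ * φ⁻¹ * ψ⁻¹) / 4, by linarith, ?_⟩
    intro η hdisp
    -- c := η⁻¹ ψ η is supported in η⁻¹(U), disjoint from U, hence commutes with φ
    set c : G := η⁻¹ * ψ * η with hc
    have hVU : U ∩ ⇑(η : X ≃ₜ X) ⁻¹' U = ∅ := by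
      ext x
      simp only [Set.mem_inter_iff, Set.mem_preimage, Set.mem_empty_iff_false, iff_false]
      rintro ⟨hx, hx'⟩
      have : (η : X ≃ₜ X) x ∈ ⇑(η : X ≃ₜ X) '' U ∩ U := ⟨⟨x, hx, rfl⟩, hx'⟩
      simp [hdisp] at this
    have hcsupp : ∀ p ∉ ⇑(η : X ≃ₜ X) ⁻¹' U, (c : X ≃ₜ X) p = p := by
      intro p hp
      have h1 : (c : X ≃ₜ X) p = ((η : X ≃ₜ X)).symm ((ψ : X ≃ₜ X) ((η : X ≃ₜ X) p)) := rfl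
      rw [h1, hψ _ hp, Homeomorph.symm_apply_apply]
    have hcommute : φ * c = c * φ := by
      apply Subtype.ext
      push_cast
      apply Homeomorph.ext
      intro x
      exact commute_of_disjoint_support hVU hφ hcsupp x
    -- key algebraic identity
    set k : G := φ * η * φ⁻¹ * η⁻¹ with hk
    have hψeq : (ψ : G) = η * c * η⁻¹ := by rw [hc]; group
    have hkey : φ * ψ * φ⁻¹ * ψ⁻¹ = k * (ψ * k⁻¹ * ψ⁻¹) := by
      have h1 : k * ψ * k⁻¹ = φ * η * φ⁻¹ * c * φ * η⁻¹ * φ⁻¹ := by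
        rw [hψeq, hk]; group
      have h2 : φ⁻¹ * c = c * φ⁻¹ := by
        have h2' := congrArg (fun z => φ⁻¹ * z * φ⁻¹) hcommute
        simpa [mul_assoc] using h2'.symm
      have h3 : k * ψ * k⁻¹ = φ * η * c * η⁻¹ * φ⁻¹ := by
        rw [h1]
        calc φ * η * φ⁻¹ * c * φ * η⁻¹ * φ⁻¹
            = φ * η * (φ⁻¹ * c) * φ * η⁻¹ * φ⁻¹ := by group
          _ = φ * η * (c * φ⁻¹) * φ * η⁻¹ * φ⁻¹ := by rw [h2]
          _ = φ * η * c * η⁻¹ * φ⁻¹ := by group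
      have h4 : k * ψ * k⁻¹ = φ * ψ * φ⁻¹ := by
        rw [h3, hψeq]; group
      calc φ * ψ * φ⁻¹ * ψ⁻¹ = (k * ψ * k⁻¹) * ψ⁻¹ := by rw [h4]
        _ = k * (ψ * k⁻¹ * ψ⁻¹) := by group
    have hρk : ρ k ≤ 2 * ρ η := by
      have h1 : ρ k ≤ ρ (φ * η * φ⁻¹) + ρ η⁻¹ := by
        have := htri (φ * η * φ⁻¹) η⁻¹
        simpa [hk, mul_assoc] using this
      rw [hconj, hinv] at h1
      linarith
    have hρconj : ρ (ψ * k⁻¹ * ψ⁻¹) = ρ k := by rw [hconj, hinv]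
    have hbound : ρ (φ * ψ * φ⁻¹ * ψ⁻¹) ≤ 4 * ρ η := by
      calc ρ (φ * ψ * φ⁻¹ * ψ⁻¹) = ρ (k * (ψ * k⁻¹ * ψ⁻¹)) := by rw [hkey]
        _ ≤ ρ k + ρ (ψ * k⁻¹ * ψ⁻¹) := htri _ _
        _ = ρ k + ρ k := by rw [hρconj]
        _ ≤ 4 * ρ η := by linarith
    linarith [hnd _ hcomm_ne]
  · -- positive displacement energy → nondegenerate
    intro hde g hg
    have hx : ∃ x, (g : X ≃ₜ X) x ≠ x := by
      by_contra h
      push_neg at h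
      exact hg (Subtype.ext (Homeomorph.ext h))
    obtain ⟨x, hx⟩ := hx
    obtain ⟨V, W, hVopen, hWopen, hgxV, hxW, hVW⟩ := t2_separation hx
    set U : Set X := W ∩ ⇑(g : X ≃ₜ X) ⁻¹' V with hU
    have hUopen : IsOpen U := hWopen.inter (hVopen.preimage (g : X ≃ₜ X).continuous)
    have hUne : U.Nonempty := ⟨x, hxW, hgxV⟩
    obtain ⟨c, hc, hcb⟩ := hde U hUne hUopen
    have hdisp : ⇑(g : X ≃ₜ X) '' U ∩ U = ∅ := by
      ext y
      simp only [Set.mem_inter_iff, Set.mem_image, Set.mem_empty_iff_false, iff_false]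
      rintro ⟨⟨z, hz, rfl⟩, hy⟩
      exact Set.disjoint_left.mp hVW hz.2 hy.1
    exact lt_of_lt_of_le hc (hcb g hdisp)
end

section
/- Let n ≥ 1 and let 𝕋^{2n} = (ℝ/ℤ)ⁿ × (ℝ/ℤ)ⁿ with coordinates (x₁,…,xₙ; y₁,…,yₙ) and Haar probability measure μ. For α ∈ ℝ let φ_α : 𝕋^{2n} → 𝕋^{2n} be the rotation φ_α(x₁,…,xₙ; y₁,…,yₙ) = (x₁+α, x₂,…,xₙ; y₁,…,yₙ), and let U ⊆ 𝕋^{2n} be the open set of points whose coordinate x₁ is the class of a real number in (1/4, 3/4) and whose coordinate y₁ is the class of a real number in (0, 1/4). Then for every α with 0 < α < 1/8 there exists a homeomorphism ψ_α of 𝕋^{2n} preserving the Haar measure μ such that (ψ_α ∘ φ_α ∘ ψ_α⁻¹)(U) ∩ U = ∅; moreover ψ_α can be taken of the shear form ψ_α(x₁,…,xₙ; y₁,…,yₙ) = (x₁,…,xₙ; y₁ + h(x₁), y₂,…,yₙ) for a smooth function h on the circle. (This is the Claim in the proof of the paper's Theorem 3.5: the conjugates of the small rotations φ_α all displace a fixed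 open set U independent of α.) -/
open MeasureTheory

/-- The torus `𝕋^{2n} = (ℝ/ℤ)ⁿ × (ℝ/ℤ)ⁿ`, carrying its Haar probability measure
(the `volume` of the product measure space) and the product topology. -/
abbrev Torus (n : ℕ) : Type :=
  (Fin n → AddCircle (1 : ℝ)) × (Fin n → AddCircle (1 : ℝ))

/-- The rotation `φ_α (x₁,…,xₙ; y₁,…,yₙ) = (x₁ + α, x₂,…,xₙ; y₁,…,yₙ)`. -/
noncomputable def rot (n : ℕ) (hn : 0 < n) (α : ℝ) : Torus n → Torus n :=
  fun p => (Function.update p.1 ⟨0, hn⟩ (p.1 ⟨0, hn⟩ + (α : AddCircle (1 : ℝ))), p.2)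

/-- The open set `U` of points whose `x₁`-coordinate is the class of a real in `(1/4, 3/4)`
and whose `y₁`-coordinate is the class of a real in `(0, 1/4)`. -/
noncomputable def Uset (n : ℕ) (hn : 0 < n) : Set (Torus n) :=
  {p | p.1 ⟨0, hn⟩ ∈ ((↑) : ℝ → AddCircle (1 : ℝ)) '' Set.Ioo (1 / 4) (3 / 4) ∧
       p.2 ⟨0, hn⟩ ∈ ((↑) : ℝ → AddCircle (1 : ℝ)) '' Set.Ioo 0 (1 / 4)}

noncomputable def shear (n : ℕ) (hn : 0 < n) (H : AddCircle (1:ℝ) → AddCircle (1:ℝ))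
    (hH : Continuous H) : Torus n ≃ₜ Torus n :=
  { toFun := fun p => (p.1, Function.update p.2 ⟨0, hn⟩ (p.2 ⟨0, hn⟩ + H (p.1 ⟨0, hn⟩)))
    invFun := fun p => (p.1, Function.update p.2 ⟨0, hn⟩ (p.2 ⟨0, hn⟩ - H (p.1 ⟨0, hn⟩)))
    left_inv := fun p => by
      refine Prod.ext rfl ?_
      funext j
      by_cases hj : j = ⟨0, hn⟩ <;> simp [Function.update_apply, hj]
    right_inv := fun p => by
      refine Prod.ext rfl ?_
      funext j
      by_cases hj : j = ⟨0, hn⟩ <;> simp [Function.update_apply, hj]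
    continuous_toFun := by
      refine continuous_fst.prodMk (continuous_pi fun j => ?_)
      by_cases hj : j = ⟨0, hn⟩
      · subst hj
        simp only [Function.update_self]
        exact ((continuous_apply _).comp continuous_snd).add
          (hH.comp ((continuous_apply _).comp continuous_fst))
      · simp only [Function.update_of_ne hj]
        exact (continuous_apply j).comp continuous_snd
    continuous_invFun := by
      refine continuous_fst.prodMk (continuous_pi fun j => ?_)
      by_cases hj : j = ⟨0, hn⟩
      · subst hj
        simp only [Function.update_self]
        exact ((continuous_apply _).comp continuous_snd).sub
          (hH.comp ((continuous_apply _).comp continuous_fst))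
      · simp only [Function.update_of_ne hj]
        exact (continuous_apply j).comp continuous_snd }

theorem shear_mp (n : ℕ) (hn : 0 < n) (H : AddCircle (1:ℝ) → AddCircle (1:ℝ))
    (hH : Continuous H) :
    MeasurePreserving (shear n hn H hH) (volume : Measure (Torus n)) volume := by
  set i : Fin n := ⟨0, hn⟩
  have hup : ∀ (x y : Fin n → AddCircle (1:ℝ)),
      Function.update y i (y i + H (x i)) = y + fun j => if j = i then H (x i) else 0 := by
    intro x y; funext j
    by_cases hj : j = i <;> simp [Function.update_apply, hj]
  have hv : Measurable fun x : Fin n → AddCircle (1:ℝ) =>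
      (fun j => if j = i then H (x i) else 0 : Fin n → AddCircle (1:ℝ)) := by
    refine measurable_pi_lambda _ fun j => ?_
    by_cases hj : j = i
    · simp only [hj, if_true]
      exact hH.measurable.comp (measurable_pi_apply i)
    · simp [hj]
  have key := MeasurePreserving.skew_product (μa := (volume : Measure (Fin n → AddCircle (1:ℝ))))
      (μb := volume) (μc := (volume : Measure (Fin n → AddCircle (1:ℝ)))) (μd := volume)
      (f := id) (MeasurePreserving.id _)
      (g := fun x y => y + fun j => if j = i then H (x i) else 0)
      (measurable_snd.add (hv.comp measurable_fst))
      (Filter.Eventually.of_forall fun x =>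
        (measurePreserving_add_right volume _).map_eq)
  have : (fun p : Torus n => (p.1, p.2 + fun j => if j = i then H (p.1 i) else 0)) =
      ⇑(shear n hn H hH) := by
    funext p
    refine Prod.ext rfl ?_
    exact (hup p.1 p.2).symm
  rw [show (volume : Measure (Torus n)) = (volume : Measure (Fin n → AddCircle (1:ℝ))).prod volume from rfl]
  simpa [this] using key

/-- For `0 < α < 1/8` there is a Haar-measure-preserving homeomorphism
`ψ_α` of `𝕋^{2n}` such that the conjugate `ψ_α ∘ φ_α ∘ ψ_α⁻¹` displaces the fixed open set
`U`; moreover `ψ_α` can be taken to be the shear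
`(x; y) ↦ (x; y₁ + h(x₁), y₂,…,yₙ)` for a smooth circle function `h`. -/
theorem stmt_8 (n : ℕ) (hn : 0 < n) (α : ℝ) (h0 : 0 < α) (h1 : α < 1 / 8) :
    ∃ ψ : Torus n ≃ₜ Torus n,
      MeasurePreserving ψ (volume : Measure (Torus n)) volume ∧
      (⇑ψ ∘ rot n hn α ∘ ⇑ψ.symm) '' Uset n hn ∩ Uset n hn = ∅ ∧
      ∃ h : ℝ → ℝ, ContDiff ℝ (⊤ : ℕ∞) h ∧
        ∃ H : AddCircle (1 : ℝ) → AddCircle (1 : ℝ),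
          (∀ r : ℝ, H (r : AddCircle (1 : ℝ)) = ((h r : ℝ) : AddCircle (1 : ℝ))) ∧
          ∀ p : Torus n,
            ψ p = (p.1, Function.update p.2 ⟨0, hn⟩ (p.2 ⟨0, hn⟩ + H (p.1 ⟨0, hn⟩))) := by
  have h01 : Fact ((0:ℝ) < 1) := ⟨one_pos⟩
  set i : Fin n := ⟨0, hn⟩ with hidef
  set m : ℕ := ⌈(4*α)⁻¹⌉₊ with hm
  have hα4 : (0:ℝ) < 4*α := by linarith
  have hm1 : (1:ℝ)/4 ≤ (m:ℝ)*α := by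
    have h := Nat.le_ceil ((4*α)⁻¹)
    have := mul_le_mul_of_nonneg_right h (le_of_lt h0)
    rw [inv_mul_eq_div] at this
    rw [div_le_iff₀ hα4] at this
    nlinarith [this]
  have hm2 : (m:ℝ)*α < 3/8 := by
    have h := Nat.ceil_lt_add_one (le_of_lt (inv_pos.mpr hα4))
    have := mul_lt_mul_of_pos_right h h0
    have h2 : (4*α)⁻¹ * α = 1/4 := by field_simp
    nlinarith [this, h2]
  set H : AddCircle (1:ℝ) → AddCircle (1:ℝ) := fun x => m • x with hHdef
  have hHc : Continuous H := continuous_id.nsmul m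
  have hHcoe : ∀ r : ℝ, H (r : AddCircle (1:ℝ)) = (((m:ℝ) * r : ℝ) : AddCircle (1:ℝ)) := by
    intro r
    rw [hHdef]
    simp only [← AddCircle.coe_nsmul, nsmul_eq_mul]
  refine ⟨shear n hn H hHc, shear_mp n hn H hHc, ?_, fun r => (m:ℝ) * r,
    (contDiff_const.mul contDiff_id), H, hHcoe, fun p => rfl⟩
  have hF : ∀ p : Torus n,
      ((⇑(shear n hn H hHc) ∘ rot n hn α ∘ ⇑(shear n hn H hHc).symm) p).2 i =
        p.2 i + (((m:ℝ)*α : ℝ) : AddCircle (1:ℝ)) := by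
    intro p
    show (Function.update (Function.update p.2 i (p.2 i - H (p.1 i))) i
        ((Function.update p.2 i (p.2 i - H (p.1 i))) i +
          H ((Function.update p.1 i (p.1 i + ((α:ℝ) : AddCircle (1:ℝ)))) i))) i = _
    simp only [Function.update_self]
    have hadd : H (p.1 i + ((α:ℝ) : AddCircle (1:ℝ))) =
        H (p.1 i) + (((m:ℝ)*α : ℝ) : AddCircle (1:ℝ)) := by
      rw [hHdef]
      simp only [smul_add]
      rw [← hHcoe α]
    rw [hadd]
    abel
  rw [Set.eq_empty_iff_forall_notMem]
  rintro q ⟨⟨p, hp, rfl⟩, hq⟩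
  obtain ⟨-, s, hs, hsy⟩ := hp
  obtain ⟨-, s', hs', hs'y⟩ := hq
  rw [hF p, ← hsy, ← AddCircle.coe_add] at hs'y
  have hmem1 : s' ∈ Set.Ico (0:ℝ) (0 + 1) := by
    constructor <;> [exact le_of_lt hs'.1; · rw [zero_add]; linarith [hs'.2]]
  have hmem2 : s + (m:ℝ)*α ∈ Set.Ico (0:ℝ) (0 + 1) := by
    constructor
    · nlinarith [hs.1, hm1]
    · rw [zero_add]; nlinarith [hs.2, hm2]
  have := (AddCircle.coe_eq_coe_iff_of_mem_Ico hmem1 hmem2).mp hs'y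
  nlinarith [hs.1, hs'.2, hm1, this]
end

section
/- Let G be a group, N a normal subgroup of G, and ρ : N → ℝ a norm on N invariant under conjugation by all elements of G. For K > 0 define ρ_K : G → ℝ by ρ_K(φ) = min(ρ(φ), K) if φ ∈ N, and ρ_K(φ) = K if φ ∉ N. Then ρ_K is a conjugation-invariant norm on G: ρ_K(φ) ≥ 0 with equality iff φ = 1; ρ_K(φ⁻¹) = ρ_K(φ); ρ_K(φψ) ≤ ρ_K(φ) + ρ_K(ψ); and ρ_K(θφθ⁻¹) = ρ_K(φ) for all φ, ψ, θ ∈ G. (This is the paper's Proposition 3.12, stated abstractly with N in place of Ham(M,ω), G in place of Symp₀(M,ω), and ρ in place of the Hofer norm.) -/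
/-- Let `N` be a normal subgroup of `G` and `ρ : N → ℝ` a norm on `N`
invariant under conjugation by all of `G`. For `K > 0`, the function
`ρ_K(φ) = min (ρ φ) K` for `φ ∈ N` and `ρ_K(φ) = K` for `φ ∉ N`
is a conjugation-invariant norm on `G`. -/
theorem stmt_11 {G : Type*} [Group G] (N : Subgroup G) [N.Normal]
    (ρ : N → ℝ) (K : ℝ) (hK : 0 < K)
    (hnonneg : ∀ f, 0 ≤ ρ f) (hzero : ∀ f, ρ f = 0 ↔ f = 1)
    (hinv : ∀ f, ρ f⁻¹ = ρ f)
    (htri : ∀ f g, ρ (f * g) ≤ ρ f + ρ g)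
    (hconjG : ∀ (f : N) (h : G) (hmem : h * ↑f * h⁻¹ ∈ N), ρ ⟨h * ↑f * h⁻¹, hmem⟩ = ρ f)
    (ρK : G → ℝ)
    (hρK₁ : ∀ (φ : G) (hφ : φ ∈ N), ρK φ = min (ρ ⟨φ, hφ⟩) K)
    (hρK₂ : ∀ φ : G, φ ∉ N → ρK φ = K) :
    (∀ φ : G, 0 ≤ ρK φ) ∧
    (∀ φ : G, ρK φ = 0 ↔ φ = 1) ∧
    (∀ φ : G, ρK φ⁻¹ = ρK φ) ∧
    (∀ φ ψ : G, ρK (φ * ψ) ≤ ρK φ + ρK ψ) ∧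
    (∀ φ θ : G, ρK (θ * φ * θ⁻¹) = ρK φ) := by
  have hnn : ∀ φ : G, 0 ≤ ρK φ := by
    intro φ
    by_cases hφ : φ ∈ N
    · rw [hρK₁ φ hφ]; exact le_min (hnonneg _) hK.le
    · rw [hρK₂ φ hφ]; exact hK.le
  have hle : ∀ φ : G, ρK φ ≤ K := by
    intro φ
    by_cases hφ : φ ∈ N
    · rw [hρK₁ φ hφ]; exact min_le_right _ _
    · rw [hρK₂ φ hφ]
  refine ⟨hnn, ?_, ?_, ?_, ?_⟩
  · intro φ
    by_cases hφ : φ ∈ N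
    · rw [hρK₁ φ hφ]
      constructor
      · intro h
        rcases min_eq_iff.mp h with h1 | h1
        · have := (hzero ⟨φ, hφ⟩).mp h1.1
          simpa [Subtype.ext_iff] using this
        · exact absurd h1.1 hK.ne'
      · intro h
        subst h
        have : ρ ⟨(1 : G), hφ⟩ = 0 := (hzero _).mpr rfl
        rw [this, min_eq_left hK.le]
    · rw [hρK₂ φ hφ]
      constructor
      · intro h; exact absurd h hK.ne'
      · intro h; subst h; exact absurd N.one_mem hφ
  · intro φ
    by_cases hφ : φ ∈ N
    · have hφi : φ⁻¹ ∈ N := N.inv_mem hφ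
      rw [hρK₁ φ hφ, hρK₁ φ⁻¹ hφi]
      have : (⟨φ⁻¹, hφi⟩ : N) = (⟨φ, hφ⟩ : N)⁻¹ := rfl
      rw [this, hinv]
    · have hφi : φ⁻¹ ∉ N := fun h => hφ (by simpa using N.inv_mem h)
      rw [hρK₂ φ hφ, hρK₂ φ⁻¹ hφi]
  · intro φ ψ
    by_cases hφ : φ ∈ N
    · by_cases hψ : ψ ∈ N
      · have hm : φ * ψ ∈ N := N.mul_mem hφ hψ
        rw [hρK₁ _ hm, hρK₁ _ hφ, hρK₁ _ hψ]
        have h1 : (⟨φ * ψ, hm⟩ : N) = ⟨φ, hφ⟩ * ⟨ψ, hψ⟩ := rfl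
        rw [h1]
        rcases le_or_gt K (ρ ⟨φ, hφ⟩) with h | h
        · calc min (ρ (⟨φ, hφ⟩ * ⟨ψ, hψ⟩)) K ≤ K := min_le_right _ _
            _ ≤ min (ρ ⟨φ, hφ⟩) K + min (ρ ⟨ψ, hψ⟩) K := by
              have := le_min (hnonneg ⟨ψ, hψ⟩) hK.le
              rw [min_eq_right h]; linarith
        · rcases le_or_gt K (ρ ⟨ψ, hψ⟩) with h2 | h2
          · calc min (ρ (⟨φ, hφ⟩ * ⟨ψ, hψ⟩)) K ≤ K := min_le_right _ _
              _ ≤ min (ρ ⟨φ, hφ⟩) K + min (ρ ⟨ψ, hψ⟩) K := by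
                have := le_min (hnonneg ⟨φ, hφ⟩) hK.le
                rw [min_eq_right h2]; linarith
          · rw [min_eq_left h.le, min_eq_left h2.le]
            exact le_trans (min_le_left _ _) (htri _ _)
      · calc ρK (φ * ψ) ≤ K := hle _
          _ = ρK ψ := (hρK₂ ψ hψ).symm
          _ ≤ ρK φ + ρK ψ := by have := hnn φ; linarith
    · calc ρK (φ * ψ) ≤ K := hle _
        _ = ρK φ := (hρK₂ φ hφ).symm
        _ ≤ ρK φ + ρK ψ := by have := hnn ψ; linarith
  · intro φ θ
    by_cases hφ : φ ∈ N
    · have hm : θ * φ * θ⁻¹ ∈ N := Subgroup.Normal.conj_mem ‹N.Normal› φ hφ θ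
      rw [hρK₁ _ hm, hρK₁ _ hφ, hconjG ⟨φ, hφ⟩ θ hm]
    · have hm : θ * φ * θ⁻¹ ∉ N := by
        intro h
        apply hφ
        have := Subgroup.Normal.conj_mem ‹N.Normal› _ h θ⁻¹
        simpa [mul_assoc] using this
      rw [hρK₂ _ hm, hρK₂ _ hφ]
end

section
/- Let G be a group, N a normal subgroup of G, ρ : N → ℝ a norm on N invariant under conjugation by all elements of G, and a > 0. For φ ∈ G define r_a(φ) := sup{ρ(φfφ⁻¹f⁻¹) : f ∈ N, ρ(f) ≤ a}. Then: (i) the supremum is over a nonempty set bounded above by 2a, so r_a(φ) is well defined and 0 ≤ r_a(φ) ≤ 2a for all φ ∈ G, and r_a(1) = 0; (ii) r_a(φ⁻¹) = r_a(φ); (iii) r_a(φψ) ≤ r_a(φ) + r_a(ψ); (iv) r_a(θφθ⁻¹) = r_a(φ) for all θ ∈ G; and (v) r_a(φ) ≤ 2ρ(φ) for every φ ∈ N. Hence r_a is a conjugation-invariant pseudo-norm on G. (This is the content, apart from nondegeneracy, of the paper's Proposition 3.11 — Lalonde–Polterovich's Proposition 1.2.A — stated abstractly with N in place of Ham(M,ω),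 G in place of Symp₀(M,ω), and ρ in place of the Hofer norm.) -/
/-- The set of values `ρ [φ, f]` over all `f ∈ N` with `ρ f ≤ a`, where
`[φ, f] = φ f φ⁻¹ f⁻¹ ∈ N` (as `N` is normal in `G`). -/
def commValues {G : Type*} [Group G] (N : Subgroup G) (hN : N.Normal)
    (ρ : N → ℝ) (a : ℝ) (φ : G) : Set ℝ :=
  {x : ℝ | ∃ f : N, ρ f ≤ a ∧
    ρ ⟨φ * ↑f * φ⁻¹ * (↑f : G)⁻¹, mul_mem (hN.conj_mem ↑f f.2 φ) (inv_mem f.2)⟩ = x}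

/-- Let `N` be a normal subgroup of `G`, `ρ : N → ℝ` a norm on `N`
invariant under conjugation by all of `G`, and `a > 0`. Then
`r_a(φ) := sup {ρ [φ, f] : f ∈ N, ρ f ≤ a}` is well defined
(the sup is over a nonempty set bounded above by `2a`), satisfies `0 ≤ r_a ≤ 2a`,
`r_a(1) = 0`, and is a conjugation-invariant pseudo-norm on `G` with
`r_a(φ) ≤ 2 ρ(φ)` for `φ ∈ N`. -/
theorem stmt_12 {G : Type*} [Group G] (N : Subgroup G) [hN : N.Normal]
    (ρ : N → ℝ) (a : ℝ) (ha : 0 < a)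
    (hnonneg : ∀ f, 0 ≤ ρ f) (hzero : ∀ f, ρ f = 0 ↔ f = 1)
    (hinv : ∀ f, ρ f⁻¹ = ρ f)
    (htri : ∀ f g, ρ (f * g) ≤ ρ f + ρ g)
    (hconjG : ∀ (f : N) (h : G) (hmem : h * ↑f * h⁻¹ ∈ N), ρ ⟨h * ↑f * h⁻¹, hmem⟩ = ρ f)
    (ra : G → ℝ)
    (hra : ∀ φ : G, ra φ = sSup (commValues N hN ρ a φ)) :
    (∀ φ : G, (commValues N hN ρ a φ).Nonempty ∧
        (∀ x ∈ commValues N hN ρ a φ, x ≤ 2 * a) ∧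
        0 ≤ ra φ ∧ ra φ ≤ 2 * a) ∧
    ra 1 = 0 ∧
    (∀ φ : G, ra φ⁻¹ = ra φ) ∧
    (∀ φ ψ : G, ra (φ * ψ) ≤ ra φ + ra ψ) ∧
    (∀ φ θ : G, ra (θ * φ * θ⁻¹) = ra φ) ∧
    (∀ φ : N, ra ↑φ ≤ 2 * ρ φ) := by
  have memc : ∀ (φ : G) (f : N), φ * ↑f * φ⁻¹ * (↑f : G)⁻¹ ∈ N :=
    fun φ f => mul_mem (hN.conj_mem ↑f f.2 φ) (inv_mem f.2)
  set c : G → N → N := fun φ f => ⟨φ * ↑f * φ⁻¹ * (↑f : G)⁻¹, memc φ f⟩ with hc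
  -- bound by 2 ρ f
  have hle2 : ∀ (φ : G) (f : N), ρ (c φ f) ≤ 2 * ρ f := by
    intro φ f
    have h1 : c φ f = ⟨φ * ↑f * φ⁻¹, hN.conj_mem ↑f f.2 φ⟩ * f⁻¹ := rfl
    rw [h1]
    have := htri ⟨φ * ↑f * φ⁻¹, hN.conj_mem ↑f f.2 φ⟩ f⁻¹
    rw [hconjG, hinv] at this
    linarith
  have hzero_mem : ∀ φ : G, (0 : ℝ) ∈ commValues N hN ρ a φ := by
    intro φ
    refine ⟨1, ?_, ?_⟩
    · rw [(hzero 1).2 rfl]; exact ha.le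
    · show ρ (c φ 1) = 0
      have h1 : c φ 1 = 1 := by
        apply Subtype.ext
        show φ * ↑(1 : N) * φ⁻¹ * (↑(1 : N) : G)⁻¹ = ↑(1 : N)
        simp
      rw [h1, (hzero 1).2 rfl]
  have hub : ∀ φ : G, ∀ x ∈ commValues N hN ρ a φ, x ≤ 2 * a := by
    rintro φ x ⟨f, hf, rfl⟩
    show ρ (c φ f) ≤ 2 * a
    have := hle2 φ f
    linarith
  have hbdd : ∀ φ : G, BddAbove (commValues N hN ρ a φ) :=
    fun φ => ⟨2 * a, fun x hx => hub φ x hx⟩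
  have hne : ∀ φ : G, (commValues N hN ρ a φ).Nonempty := fun φ => ⟨0, hzero_mem φ⟩
  have hra0 : ∀ φ : G, 0 ≤ ra φ := fun φ => by
    rw [hra]; exact le_csSup (hbdd φ) (hzero_mem φ)
  have hra2a : ∀ φ : G, ra φ ≤ 2 * a := fun φ => by
    rw [hra]; exact csSup_le (hne φ) (hub φ)
  have hmemle : ∀ (φ : G) (f : N), ρ f ≤ a → ρ (c φ f) ≤ ra φ := fun φ f hf => by
    rw [hra]; exact le_csSup (hbdd φ) ⟨f, hf, rfl⟩
  -- conjugation
  have hconj_eq : ∀ (θ φ : G) (f : N),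
      ρ (c (θ * φ * θ⁻¹) f) = ρ (c φ ⟨θ⁻¹ * ↑f * θ⁻¹⁻¹, hN.conj_mem ↑f f.2 θ⁻¹⟩) := by
    intro θ φ f
    set g : N := ⟨θ⁻¹ * ↑f * θ⁻¹⁻¹, hN.conj_mem ↑f f.2 θ⁻¹⟩ with hg
    have key : c (θ * φ * θ⁻¹) f = ⟨θ * ↑(c φ g) * θ⁻¹, hN.conj_mem _ (c φ g).2 θ⟩ := by
      apply Subtype.ext
      show θ * φ * θ⁻¹ * ↑f * (θ * φ * θ⁻¹)⁻¹ * (↑f : G)⁻¹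
          = θ * (φ * (θ⁻¹ * ↑f * θ⁻¹⁻¹) * φ⁻¹ * (θ⁻¹ * ↑f * θ⁻¹⁻¹)⁻¹) * θ⁻¹
      group
    rw [key, hconjG]
  have hsubset : ∀ θ φ : G,
      commValues N hN ρ a (θ * φ * θ⁻¹) ⊆ commValues N hN ρ a φ := by
    rintro θ φ x ⟨f, hf, rfl⟩
    refine ⟨⟨θ⁻¹ * ↑f * θ⁻¹⁻¹, hN.conj_mem ↑f f.2 θ⁻¹⟩, ?_, ?_⟩
    · rw [hconjG]; exact hf
    · exact (hconj_eq θ φ f).symm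
  have hconj_set : ∀ θ φ : G,
      commValues N hN ρ a (θ * φ * θ⁻¹) = commValues N hN ρ a φ := by
    intro θ φ
    apply Set.Subset.antisymm (hsubset θ φ)
    have h2 : θ⁻¹ * (θ * φ * θ⁻¹) * θ⁻¹⁻¹ = φ := by group
    have := hsubset θ⁻¹ (θ * φ * θ⁻¹)
    rwa [h2] at this
  -- inverse
  have hinv_c : ∀ (φ : G) (f : N), ρ (c φ⁻¹ f) = ρ (c φ f) := by
    intro φ f
    have key : c φ⁻¹ f =
        ⟨φ⁻¹ * ↑((c φ f)⁻¹) * φ⁻¹⁻¹, hN.conj_mem _ ((c φ f)⁻¹).2 φ⁻¹⟩ := by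
      apply Subtype.ext
      show φ⁻¹ * ↑f * φ⁻¹⁻¹ * (↑f : G)⁻¹
          = φ⁻¹ * (φ * ↑f * φ⁻¹ * (↑f : G)⁻¹)⁻¹ * φ⁻¹⁻¹
      group
    rw [key, hconjG, hinv]
  have hinv_set : ∀ φ : G, commValues N hN ρ a φ⁻¹ = commValues N hN ρ a φ := by
    intro φ; ext x
    constructor
    · rintro ⟨f, hf, rfl⟩; exact ⟨f, hf, (hinv_c φ f).symm⟩
    · rintro ⟨f, hf, rfl⟩; exact ⟨f, hf, hinv_c φ f⟩
  -- triangle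
  have htri_ra : ∀ φ ψ : G, ra (φ * ψ) ≤ ra φ + ra ψ := by
    intro φ ψ
    rw [hra (φ * ψ)]
    apply csSup_le (hne _)
    rintro x ⟨f, hf, rfl⟩
    show ρ (c (φ * ψ) f) ≤ ra φ + ra ψ
    have key : c (φ * ψ) f
        = ⟨φ * ↑(c ψ f) * φ⁻¹, hN.conj_mem _ (c ψ f).2 φ⟩ * c φ f := by
      apply Subtype.ext
      show φ * ψ * ↑f * (φ * ψ)⁻¹ * (↑f : G)⁻¹
          = φ * (ψ * ↑f * ψ⁻¹ * (↑f : G)⁻¹) * φ⁻¹ * (φ * ↑f * φ⁻¹ * (↑f : G)⁻¹)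
      group
    rw [key]
    refine le_trans (htri _ _) ?_
    rw [hconjG]
    have h1 := hmemle ψ f hf
    have h2 := hmemle φ f hf
    linarith
  -- ra 1 = 0
  have h1 : ra 1 = 0 := by
    rw [hra]
    apply le_antisymm
    · apply csSup_le (hne 1)
      rintro x ⟨f, hf, rfl⟩
      show ρ (c 1 f) ≤ 0
      have hc1 : c 1 f = 1 := by
        apply Subtype.ext
        show (1 : G) * ↑f * (1 : G)⁻¹ * (↑f : G)⁻¹ = ↑(1 : N)
        simp
      rw [hc1]
      exact le_of_eq ((hzero 1).2 rfl)
    · exact le_csSup (hbdd 1) (hzero_mem 1)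
  -- (v)
  have hv : ∀ φ : N, ra ↑φ ≤ 2 * ρ φ := by
    intro φ
    rw [hra]
    apply csSup_le (hne _)
    rintro x ⟨f, hf, rfl⟩
    show ρ (c ↑φ f) ≤ 2 * ρ φ
    have key : c ↑φ f
        = φ * ⟨↑f * ↑(φ⁻¹) * (↑f : G)⁻¹, hN.conj_mem ↑(φ⁻¹) (φ⁻¹).2 ↑f⟩ := by
      apply Subtype.ext
      show (↑φ : G) * ↑f * (↑φ : G)⁻¹ * (↑f : G)⁻¹
          = ↑φ * (↑f * (↑φ : G)⁻¹ * (↑f : G)⁻¹)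
      group
    rw [key]
    refine le_trans (htri _ _) ?_
    rw [hconjG, hinv]
    linarith
  exact ⟨fun φ => ⟨hne φ, hub φ, hra0 φ, hra2a φ⟩, h1,
    fun φ => by rw [hra, hra, hinv_set],
    htri_ra,
    fun φ θ => by rw [hra, hra, hconj_set θ φ],
    hv⟩
end
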